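/- With no channel knowledge at the transmitter and the optimal fixed rate λ(snr) = snr/log_e 2 (i.e., a = 1), the throughput r of the ON–OFF discrete Markov source is twice differentiable at snr = 0 and the wideband slope equals S₀ = −2·(r'(0))²·log_e 2 / r''(0) = 1 / (θ·(η − 1)/(2·log_e 2) + θ·e/log_e 2 + 2e), where η = (1 − p22)(p11 + p22)/((1 − p11)(2 − p11 − p22)). -/

import Mathlib

/-!
With `2 ^ λ(snr) = e^snr`, the ON probability is `e^{-E(snr)} / (e^snr + 1)` for
`E = dslope exp 0`, i.e. `E(s) = (e^s - 1) / s`, which is analytic through `s = 0`. Hence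
`g = 1 - P·(1 - e^{-c·snr})` (with `c = θ / log 2`) is analytic, and so is
`r = (P_on / θ) · h ∘ g` near `0`, where
`h x = log ((1 - p₁₁x) / ((1 - p₁₁ - p₂₂)x² + p₂₂x))`.
Since `g 0 = 1`, the chain rule and Faà di Bruno give `r'(0) = (P_on/θ) h'(1) g'(0)` and
`r''(0) = (P_on/θ) (h''(1) g'(0)² + h'(1) g''(0))`. Only `E'(0) = 1/2` enters `g''(0)`, because
the factor `1 - e^{-c·snr}` vanishes at `0`; and `E'(0) = 1/2` follows by differentiating
`s · E(s) = e^s - 1` twice at `0`.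
-/

open Real Topology

theorem AnalyticAt.dslope {𝕜 E : Type*} [NontriviallyNormedField 𝕜] [NormedAddCommGroup E]
    [NormedSpace 𝕜 E] {f : 𝕜 → E} {a b : 𝕜} (ha : AnalyticAt 𝕜 f a)
    (hb : AnalyticAt 𝕜 f b) :
    AnalyticAt 𝕜 (dslope f a) b := by
  rcases eq_or_ne b a with rfl | hba
  · obtain ⟨p, hp⟩ := ha
    exact ⟨_, hp.has_fpower_series_dslope_fslope⟩
  · refine AnalyticAt.congr ?_ (dslope_eventuallyEq_slope_of_ne f hba).symm
    simp only [slope_fun_def, vsub_eq_sub]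
    have : b - a ≠ 0 := sub_ne_zero.mpr hba
    fun_prop (disch := assumption)

theorem iteratedDeriv_two_eq_of_eventually_hasDerivAt {𝕜 F : Type*}
    [NontriviallyNormedField 𝕜] [NormedAddCommGroup F] [NormedSpace 𝕜 F] {f f' : 𝕜 → F}
    {x : 𝕜} {a : F}
    (hf : ∀ᶠ y in 𝓝 x, HasDerivAt f (f' y) y) (hf' : HasDerivAt f' a x) :
    iteratedDeriv 2 f x = a := by
  rw [iteratedDeriv_succ, iteratedDeriv_one]
  exact (hf'.congr_of_eventuallyEq (hf.mono fun y hy => hy.deriv)).deriv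

lemma analyticAt_dslope_exp (x : ℝ) : AnalyticAt ℝ (dslope exp 0) x :=
  analyticAt_rexp.dslope analyticAt_rexp

lemma dslope_exp_zero : dslope exp 0 0 = 1 := by simp [dslope_same]

lemma deriv_dslope_exp_zero : deriv (dslope exp 0) 0 = 1 / 2 := by
  have key : (fun x => x * dslope exp 0 x) = fun x => exp x - 1 := by
    funext x
    simpa using sub_smul_dslope exp 0 x
  have h2 := congrArg (fun f => iteratedDeriv 2 f 0) key
  rw [iteratedDeriv_fun_mul (f := fun x => x) contDiffAt_id (analyticAt_dslope_exp 0).contDiffAt,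
    iteratedDeriv_fun_sub analyticAt_rexp.contDiffAt contDiffAt_const] at h2
  simp [iteratedDeriv_fun_id_zero, iteratedDeriv_eq_iterate, iter_deriv_exp] at h2
  linarith

/-- The ON probability `P` with its removable singularity at `snr = 0` filled in. -/
noncomputable def onProb (s : ℝ) : ℝ := exp (-dslope exp 0 s) / (exp s + 1)

lemma analyticAt_onProb (s : ℝ) : AnalyticAt ℝ onProb s := by
  have := analyticAt_dslope_exp s
  have : exp s + 1 ≠ 0 := by positivity
  unfold onProb
  fun_prop (disch := assumption)

lemma onProb_zero : onProb 0 = exp (-1) / 2 := by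
  norm_num [onProb, dslope_exp_zero]

lemma deriv_onProb_zero : deriv onProb 0 = -exp (-1) / 2 := by
  have hE : HasDerivAt (dslope exp 0) (1 / 2) 0 := by
    rw [← deriv_dslope_exp_zero]
    exact (analyticAt_dslope_exp 0).differentiableAt.hasDerivAt
  have hP : HasDerivAt onProb _ 0 :=
    (hE.neg.exp).div ((hasDerivAt_exp 0).add_const 1) (by positivity)
  rw [hP.deriv]
  norm_num [dslope_exp_zero]
  ring

noncomputable def serviceMGF (c s : ℝ) : ℝ := 1 - onProb s * (1 - exp (-(c * s)))

lemma serviceMGF_zero (c : ℝ) : serviceMGF c 0 = 1 := by simp [serviceMGF]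

/-- At `s = 0` both sides are `1`: the junk value `(2 ^ 0 - 1) / 0 = 0` on the right is
multiplied by `1 - exp 0 = 0`. -/
lemma serviceMGF_eq (θ s : ℝ) : serviceMGF (θ / log 2) s
    = 1 - exp (-((2 ^ (s / log 2) - 1) / s)) / (2 ^ (s / log 2) + 1)
      * (1 - exp (-θ * (s / log 2))) := by
  rcases eq_or_ne s 0 with rfl | hs
  · simp [serviceMGF_zero]
  have h2 : (2 : ℝ) ^ (s / log 2) = exp s := by
    rw [rpow_def_of_pos two_pos, mul_div_cancel₀ _ (log_pos one_lt_two).ne']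
  rw [serviceMGF, onProb, h2, dslope_of_ne _ hs, slope_def_field, sub_zero, exp_zero]
  ring_nf

lemma analyticAt_serviceMGF (c s : ℝ) : AnalyticAt ℝ (serviceMGF c) s := by
  have := analyticAt_onProb s
  unfold serviceMGF
  fun_prop

lemma deriv_serviceMGF_zero (c : ℝ) : deriv (serviceMGF c) 0 = -(exp (-1) * c / 2) := by
  have hB : HasDerivAt (fun s => 1 - exp (-(c * s))) _ 0 :=
    (((hasDerivAt_id 0).const_mul c).neg.exp).const_sub 1
  have hg : HasDerivAt (serviceMGF c) _ 0 :=
    (((analyticAt_onProb 0).differentiableAt.hasDerivAt).mul hB).const_sub 1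
  rw [hg.deriv]
  simp [onProb_zero]
  ring

lemma iteratedDeriv_two_serviceMGF_zero (c : ℝ) :
    iteratedDeriv 2 (serviceMGF c) 0 = exp (-1) * (c + c ^ 2 / 2) := by
  have hB : ∀ n, 0 < n → iteratedDeriv n (fun s => 1 - exp (-(c * s))) 0 = -(-c) ^ n := by
    intro n hn
    simp_rw [iteratedDeriv_const_sub hn, iteratedDeriv_neg, ← neg_mul,
      iteratedDeriv_exp_const_mul]
    simp
  unfold serviceMGF
  rw [iteratedDeriv_const_sub two_pos, Pi.neg_def, iteratedDeriv_fun_neg,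
    iteratedDeriv_fun_mul (analyticAt_onProb 0).contDiffAt (by fun_prop)]
  norm_num [Finset.sum_range_succ, hB 1 one_pos, hB 2 two_pos, onProb_zero, deriv_onProb_zero]
  ring

noncomputable def markovLogRatio (p11 p22 x : ℝ) : ℝ :=
  log ((1 - p11 * x) / ((1 - p11 - p22) * x ^ 2 + p22 * x))

section MarkovLogRatio

variable {p11 p22 : ℝ}

lemma hasDerivAt_markovLogRatio {x : ℝ} (hN : 1 - p11 * x ≠ 0)
    (hD : (1 - p11 - p22) * x ^ 2 + p22 * x ≠ 0) :
    HasDerivAt (markovLogRatio p11 p22) (-p11 / (1 - p11 * x)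
      - (2 * (1 - p11 - p22) * x + p22) / ((1 - p11 - p22) * x ^ 2 + p22 * x)) x := by
  have hN' : HasDerivAt (fun x => 1 - p11 * x) _ x :=
    ((hasDerivAt_id x).const_mul p11).const_sub 1
  have hD' : HasDerivAt (fun x => (1 - p11 - p22) * x ^ 2 + p22 * x) _ x :=
    ((hasDerivAt_pow 2 x).const_mul (1 - p11 - p22)).add ((hasDerivAt_id x).const_mul p22)
  refine ((hN'.div hD' hD).log (div_ne_zero hN hD)).congr_deriv ?_
  simp only [Pi.div_apply, Nat.cast_ofNat, Nat.add_one_sub_one, pow_one]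
  generalize (1 - p11 - p22) * x ^ 2 + p22 * x = D at hD ⊢
  field_simp

lemma analyticAt_markovLogRatio_one (hp11 : p11 ≠ 1) :
    AnalyticAt ℝ (markovLogRatio p11 p22) 1 := by
  have h1 : 1 - p11 ≠ 0 := sub_ne_zero.mpr hp11.symm
  have hD1 : (1 - p11 - p22) * 1 ^ 2 + p22 * 1 = 1 - p11 := by ring
  refine AnalyticAt.log (by fun_prop (disch := rwa [hD1])) ?_
  rw [hD1, mul_one, div_self h1]
  exact one_pos

lemma deriv_markovLogRatio_one (hp11 : p11 ≠ 1) :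
    deriv (markovLogRatio p11 p22) 1 = -(2 - p11 - p22) / (1 - p11) := by
  have h1 : 1 - p11 ≠ 0 := sub_ne_zero.mpr hp11.symm
  have hD1 : (1 - p11 - p22) * 1 ^ 2 + p22 * 1 = 1 - p11 := by ring
  rw [(hasDerivAt_markovLogRatio (by simpa using h1) (by rwa [hD1])).deriv, hD1]
  field_simp
  ring

lemma iteratedDeriv_two_markovLogRatio_one (hp11 : p11 ≠ 1) :
    iteratedDeriv 2 (markovLogRatio p11 p22) 1
      = ((2 - p11 - p22) ^ 2 - 2 * (1 - p22)) / (1 - p11) ^ 2 := by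
  have h1 : 1 - p11 ≠ 0 := sub_ne_zero.mpr hp11.symm
  have hN1 : 1 - p11 * 1 = 1 - p11 := by ring
  have hD1 : (1 - p11 - p22) * 1 ^ 2 + p22 * 1 = 1 - p11 := by ring
  have hN : ∀ᶠ x in 𝓝 (1 : ℝ), 1 - p11 * x ≠ 0 :=
    (by fun_prop : Continuous fun x : ℝ => 1 - p11 * x).continuousAt.eventually_ne
      (by rwa [hN1])
  have hD : ∀ᶠ x in 𝓝 (1 : ℝ), (1 - p11 - p22) * x ^ 2 + p22 * x ≠ 0 :=
    (by fun_prop : Continuous fun x : ℝ => (1 - p11 - p22) * x ^ 2 + p22 * x).continuousAt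
      |>.eventually_ne (by rwa [hD1])
  refine iteratedDeriv_two_eq_of_eventually_hasDerivAt
    ((hN.and hD).mono fun x hx => hasDerivAt_markovLogRatio hx.1 hx.2) ?_
  have hN' : HasDerivAt (fun x => 1 - p11 * x) _ 1 :=
    ((hasDerivAt_id (1 : ℝ)).const_mul p11).const_sub 1
  have hD' : HasDerivAt (fun x => (1 - p11 - p22) * x ^ 2 + p22 * x) _ 1 :=
    ((hasDerivAt_pow 2 (1 : ℝ)).const_mul (1 - p11 - p22)).add
      ((hasDerivAt_id (1 : ℝ)).const_mul p22)
  have hD'' : HasDerivAt (fun x => 2 * (1 - p11 - p22) * x + p22) _ 1 :=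
    ((hasDerivAt_id (1 : ℝ)).const_mul (2 * (1 - p11 - p22))).add_const p22
  refine (((hasDerivAt_const (1 : ℝ) (-p11)).div hN' (by rwa [hN1])).sub
    (hD''.div hD' (by rwa [hD1]))).congr_deriv ?_
  rw [hN1, hD1]
  field_simp
  ring

end MarkovLogRatio

noncomputable def throughput (K c p11 p22 s : ℝ) : ℝ :=
  K * markovLogRatio p11 p22 (serviceMGF c s)

section Throughput

variable {p11 p22 : ℝ} (K c : ℝ)

lemma analyticAt_markovLogRatio_serviceMGF_zero (hp11 : p11 ≠ 1) :
    AnalyticAt ℝ (markovLogRatio p11 p22) (serviceMGF c 0) := by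
  rw [serviceMGF_zero]
  exact analyticAt_markovLogRatio_one hp11

lemma analyticAt_throughput_zero (hp11 : p11 ≠ 1) :
    AnalyticAt ℝ (throughput K c p11 p22) 0 :=
  analyticAt_const.mul ((analyticAt_markovLogRatio_serviceMGF_zero c hp11).comp
    (analyticAt_serviceMGF c 0))

lemma deriv_throughput_zero (hp11 : p11 ≠ 1) : deriv (throughput K c p11 p22) 0
    = K * (-(2 - p11 - p22) / (1 - p11) * -(exp (-1) * c / 2)) := by
  change deriv (fun s => K * (markovLogRatio p11 p22 ∘ serviceMGF c) s) 0 = _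
  rw [deriv_const_mul_field, deriv_comp _
    (analyticAt_markovLogRatio_serviceMGF_zero c hp11).differentiableAt
    (analyticAt_serviceMGF c 0).differentiableAt, serviceMGF_zero,
    deriv_markovLogRatio_one hp11, deriv_serviceMGF_zero]

lemma iteratedDeriv_two_throughput_zero (hp11 : p11 ≠ 1) :
    iteratedDeriv 2 (throughput K c p11 p22) 0
      = K * (((2 - p11 - p22) ^ 2 - 2 * (1 - p22)) / (1 - p11) ^ 2 * (exp (-1) * c / 2) ^ 2
        + -(2 - p11 - p22) / (1 - p11) * (exp (-1) * (c + c ^ 2 / 2))) := by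
  change iteratedDeriv 2 (fun s => K * (markovLogRatio p11 p22 ∘ serviceMGF c) s) 0 = _
  rw [iteratedDeriv_const_mul_field, iteratedDeriv_comp_two
    (analyticAt_markovLogRatio_serviceMGF_zero c hp11).contDiffAt
    (analyticAt_serviceMGF c 0).contDiffAt, serviceMGF_zero,
    iteratedDeriv_two_markovLogRatio_one hp11, deriv_markovLogRatio_one hp11,
    deriv_serviceMGF_zero, iteratedDeriv_two_serviceMGF_zero, neg_sq]

end Throughput

/-- With no channel knowledge at the transmitter and the optimal fixed
rate `λ(snr) = snr/log 2` (i.e. `a = 1`), the throughput `r` of the ON–OFF discrete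
Markov source is twice differentiable (from the right) at `snr = 0` and the wideband
slope equals
`S₀ = −2·(r'(0))²·log 2 / r''(0) = 1 / (θ·(η − 1)/(2·log 2) + θ·e/log 2 + 2e)`,
where `η = (1 − p22)(p11 + p22)/((1 − p11)(2 − p11 − p22))`. -/
theorem no_CSI_wideband_slope_discrete_markov
    (θ p11 p22 : ℝ) (hθ : 0 < θ)
    (hp11 : p11 ∈ Set.Ioo (0 : ℝ) 1) (hp22 : p22 ∈ Set.Ioo (0 : ℝ) 1)
    (Pon : ℝ) (hPon : Pon = (1 - p11) / (2 - p11 - p22))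
    (η : ℝ) (hη : η = (1 - p22) * (p11 + p22) / ((1 - p11) * (2 - p11 - p22)))
    (lam : ℝ → ℝ) (hlam : ∀ snr, lam snr = snr / Real.log 2)
    (P : ℝ → ℝ)
    (hP : ∀ snr, P snr =
      Real.exp (-(((2 : ℝ) ^ lam snr - 1) / snr)) / ((2 : ℝ) ^ lam snr + 1))
    (g : ℝ → ℝ)
    (hg : ∀ snr, g snr = 1 - P snr * (1 - Real.exp (-θ * lam snr)))
    (r : ℝ → ℝ)
    (hr : ∀ snr, r snr = (Pon / θ) * Real.log
      ((1 - p11 * g snr) / ((1 - p11 - p22) * (g snr) ^ 2 + p22 * g snr))) :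
    ∃ r' : ℝ → ℝ, ∃ d2 : ℝ,
      (∀ᶠ snr in nhdsWithin 0 (Set.Ici 0), HasDerivWithinAt r (r' snr) (Set.Ici 0) snr) ∧
      HasDerivWithinAt r' d2 (Set.Ici 0) 0 ∧
      -2 * (r' 0) ^ 2 * Real.log 2 / d2
        = 1 / (θ * (η - 1) / (2 * Real.log 2)
            + θ * Real.exp 1 / Real.log 2 + 2 * Real.exp 1) := by
  have hp11' : p11 ≠ 1 := hp11.2.ne
  have hrt : r = throughput (Pon / θ) (θ / log 2) p11 p22 := by
    funext s
    rw [hr, throughput, markovLogRatio, serviceMGF_eq, ← hlam, ← hP, ← hg]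
  have hr0 : AnalyticAt ℝ r 0 := hrt ▸ analyticAt_throughput_zero _ _ hp11'
  refine ⟨deriv r, deriv (deriv r) 0, ?_, ?_, ?_⟩
  · exact (hr0.eventually_analyticAt.filter_mono nhdsWithin_le_nhds).mono
      fun s hs => hs.differentiableAt.hasDerivAt.hasDerivWithinAt
  · exact hr0.deriv.differentiableAt.hasDerivAt.hasDerivWithinAt
  have hL : log 2 ≠ 0 := (log_pos one_lt_two).ne'
  have h1 : 1 - p11 ≠ 0 := sub_ne_zero.mpr hp11'.symm
  have h2 : 2 - p11 - p22 ≠ 0 := by linarith [hp11.2, hp22.2]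
  have hr1 : deriv r 0 = exp (-1) / (2 * log 2) := by
    rw [hrt, deriv_throughput_zero _ _ hp11', hPon]
    field_simp
  have hr2 : deriv (deriv r) 0 = -2 * (exp (-1) / (2 * log 2)) ^ 2 * log 2
      * (θ * (η - 1) / (2 * log 2) + θ * exp 1 / log 2 + 2 * exp 1) := by
    rw [show deriv (deriv r) 0 = iteratedDeriv 2 r 0 by rw [iteratedDeriv_succ, iteratedDeriv_one],
      hrt, iteratedDeriv_two_throughput_zero _ _ hp11', hPon, hη, exp_neg]
    field_simp
    ring
  rw [hr1, hr2, div_mul_cancel_left₀ (by positivity), one_div]
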